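/- There exist Büchi automata 𝒜 and ℬ such that L(𝒜) ⊆ L(ℬ) but Duplicator has no winning strategy in the unbounded single-buffer simulation game, i.e., 𝒜 ⋢ω ℬ. -/

import Mathlib

open scoped Classical

/-- A Büchi automaton over alphabet `S`. -/
structure BA (S : Type) where
  Q : Type
  init : Q
  trans : Q → S → Q → Prop
  acc : Q → Prop

/-- The Büchi language of `A`: infinite words with a run from the initial state
visiting accepting states infinitely often. -/
def BA.Lang {S : Type} (A : BA S) : Set (ℕ → S) :=
  { w | ∃ ρ : ℕ → A.Q, ρ 0 = A.init ∧ (∀ n, A.trans (ρ n) (w n) (ρ (n+1))) ∧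
        ∀ n, ∃ m, n ≤ m ∧ A.acc (ρ m) }

/-- Single-buffer game: the configuration after Spoiler's move `(a, q')`:
 `a` is appended to the buffer. -/
def midCfg1 {S : Type} {QA QB : Type} (c : QA × List S × QB) (m : S × QA) :
    QA × List S × QB :=
  (m.2, c.2.1 ++ [m.1], c.2.2)

/-- Duplicator's move in the single-buffer game: skip (`none`) or consume the oldest
buffered letter along a matching transition to state `p'` (`some p'`). -/
noncomputable def dupApply1 {S : Type} (A B : BA S) :
    (A.Q × List S × B.Q) → Option B.Q → Option (A.Q × List S × B.Q)
  | c, none => some c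
  | c, some p' =>
    match c.2.1 with
    | [] => none
    | b :: γ => if B.trans c.2.2 b p' then some (c.1, γ, p') else none

/-- The configuration at the start of round `n` of the single-buffer game. -/
noncomputable def playCfg1 {S : Type} (A B : BA S)
    (sp : ℕ → S × A.Q) (dm : ℕ → Option B.Q) : ℕ → Option (A.Q × List S × B.Q)
  | 0 => some (A.init, [], B.init)
  | n+1 =>
    match playCfg1 A B sp dm n with
    | none => none
    | some c =>
      if A.trans c.1 (sp n).1 (sp n).2 then dupApply1 A B (midCfg1 c (sp n)) (dm n) else none

/-- Duplicator's winning condition for the single-buffer game with capacity `k`: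
the buffer never exceeds `k` (checked after her moves), and either Spoiler's run is
non-accepting, or Duplicator moves infinitely often and her run visits accepting
states infinitely often. -/
def Win1 {S : Type} (A B : BA S) (k : ℕ∞)
    (sp : ℕ → S × A.Q) (dm : ℕ → Option B.Q) : Prop :=
  (∀ n c, playCfg1 A B sp dm n = some c → (c.2.1.length : ℕ∞) ≤ k) ∧
  ((∃ N, ∀ n, N ≤ n → ¬ A.acc (sp n).2) ∨
    ((∀ n, ∃ m, n ≤ m ∧ dm m ≠ none) ∧ (∀ n, ∃ m, n ≤ m ∧ ∃ p ∈ dm m, B.acc p)))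

/-- Single-buffer simulation `A ⊑k B`: Duplicator has a winning strategy in the
single-buffer simulation game with buffer capacity `k` (`k = ⊤` is the unbounded
buffer). -/
def Sim1 {S : Type} (A B : BA S) (k : ℕ∞) : Prop :=
  ∃ dstrat : List ((S × A.Q) × Option B.Q) → (S × A.Q) → Option B.Q,
    ∀ sp dm, (∀ n, dm n = dstrat (List.ofFn fun i : Fin n => (sp i, dm i)) (sp n)) →
      (∀ n c, playCfg1 A B sp dm n = some c → A.trans c.1 (sp n).1 (sp n).2) →
      (∀ n, (playCfg1 A B sp dm n).isSome) ∧ Win1 A B k sp dm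

/-!
`A` accepts every word in one accepting state; `B` also accepts every word, but to accept a word
with finitely many `true`s it must guess the moment after which only `false` follows and commit to
it. Against a fixed strategy of Duplicator, Spoiler first plays `false` forever: Duplicator can only
visit an accepting state by committing, at some round `t`. Spoiler then replays the same first `t`
letters, so Duplicator answers as before and is committed again at round `t`, and then plays
`true` forever: the committed state reads only `false`, so Duplicator can consume only the
finitely many `false`s already buffered and then never moves again.
-/

section Response

variable {α β : Type*} (strat : List (α × β) → α → β) (sp : ℕ → α)

def history : ℕ → List (α × β)
  | 0 => []
  | n + 1 => history n ++ [(sp n, strat (history n) (sp n))]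

def response (n : ℕ) : β := strat (history strat sp n) (sp n)

lemma history_eq_ofFn (n : ℕ) :
    history strat sp n = List.ofFn fun i : Fin n => (sp i, response strat sp i) := by
  induction n with
  | zero => rfl
  | succ n ih => simp only [List.ofFn_succ_last, Fin.val_castSucc, ← ih]; rfl

lemma response_eq (n : ℕ) :
    response strat sp n =
      strat (List.ofFn fun i : Fin n => (sp i, response strat sp i)) (sp n) := by
  rw [response, history_eq_ofFn]

variable {strat sp} {sp' : ℕ → α}

lemma history_congr {n : ℕ} (h : ∀ i < n, sp i = sp' i) :
    history strat sp n = history strat sp' n := by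
  induction n with
  | zero => rfl
  | succ n ih => rw [history, history, ih (fun i hi => h i (by omega)), h n (by omega)]

lemma response_congr {n : ℕ} (h : ∀ i ≤ n, sp i = sp' i) :
    response strat sp n = response strat sp' n := by
  rw [response, response, history_congr (fun i hi => h i hi.le), h n le_rfl]

end Response

section Play

variable {S : Type} {A B : BA S} {sp sp' : ℕ → S × A.Q} {dm dm' : ℕ → Option B.Q}

lemma playCfg1_succ_cases {n : ℕ} {c' : A.Q × List S × B.Q}
    (h : playCfg1 A B sp dm (n + 1) = some c') :
    ∃ c, playCfg1 A B sp dm n = some c ∧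
      ((dm n = none ∧ c'.2 = (c.2.1 ++ [(sp n).1], c.2.2)) ∨
        ∃ b, c.2.1 ++ [(sp n).1] = b :: c'.2.1 ∧ dm n = some c'.2.2 ∧
          B.trans c.2.2 b c'.2.2) := by
  rcases hc : playCfg1 A B sp dm n with _ | c
  · simp [playCfg1, hc] at h
  refine ⟨c, rfl, ?_⟩
  simp only [playCfg1, hc] at h
  rw [if_pos (by by_contra hA; simp [hA] at h)] at h
  rcases hd : dm n with _ | p
  · simp only [hd, dupApply1, Option.some.injEq] at h
    simp [← h, midCfg1]
  · rw [hd] at h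
    simp only [dupApply1, midCfg1] at h
    rcases hbuf : c.2.1 ++ [(sp n).1] with _ | ⟨b, γ⟩
    · simp at hbuf
    by_cases hB : B.trans c.2.2 b p
    · simp only [hbuf, hB, if_true, Option.some.injEq] at h
      exact Or.inr ⟨b, by simp [← h], by simp [← h], by simpa [← h] using hB⟩
    · simp [hbuf, hB] at h

lemma mem_buffer_of_playCfg1_eq_some {n : ℕ} {c : A.Q × List S × B.Q}
    (h : playCfg1 A B sp dm n = some c) {a : S} (ha : a ∈ c.2.1) : ∃ i < n, (sp i).1 = a := by
  induction n generalizing c with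
  | zero => cases h; simp at ha
  | succ n ih =>
    obtain ⟨c₀, h₀, hstep⟩ := playCfg1_succ_cases h
    have ha' : a ∈ c₀.2.1 ++ [(sp n).1] := by
      rcases hstep with ⟨-, hc'⟩ | ⟨b, hbuf, -⟩
      · simpa [hc'] using ha
      · simp [hbuf, ha]
    rcases List.mem_append.mp ha' with ha₀ | ha₀
    · obtain ⟨i, hi, rfl⟩ := ih h₀ ha₀
      exact ⟨i, by omega, rfl⟩
    · exact ⟨n, by omega, (List.mem_singleton.mp ha₀).symm⟩

lemma playCfg1_congr {n : ℕ} (hsp : ∀ i < n, sp i = sp' i) (hdm : ∀ i < n, dm i = dm' i) :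
    playCfg1 A B sp dm n = playCfg1 A B sp' dm' n := by
  induction n with
  | zero => rfl
  | succ n ih =>
    rw [playCfg1, playCfg1, ih (fun i hi => hsp i (by omega)) (fun i hi => hdm i (by omega)),
      hsp n (by omega), hdm n (by omega)]

lemma playCfg1_response_congr {strat : List ((S × A.Q) × Option B.Q) → S × A.Q → Option B.Q}
    {n : ℕ} (h : ∀ i < n, sp i = sp' i) :
    playCfg1 A B sp (response strat sp) n = playCfg1 A B sp' (response strat sp') n :=
  playCfg1_congr h fun i hi => response_congr fun j hj => h j (by omega)

end Play

abbrev BA.univ (S : Type) : BA S := ⟨Unit, (), fun _ _ _ => True, fun _ => True⟩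

lemma Sim1.univ_left {S : Type} {B : BA S} (h : Sim1 (BA.univ S) B ⊤) :
    ∃ strat : List ((S × Unit) × Option B.Q) → S × Unit → Option B.Q,
    ∀ sp : ℕ → S × Unit,
      (∀ n, (playCfg1 (BA.univ S) B sp (response strat sp) n).isSome) ∧
      (∀ n, ∃ m, n ≤ m ∧ response strat sp m ≠ none) ∧
      (∀ n, ∃ m, n ≤ m ∧ ∃ p ∈ response strat sp m, B.acc p) := by
  obtain ⟨strat, hstrat⟩ := h
  refine ⟨strat, fun sp => ?_⟩
  obtain ⟨hsome, -, hspoiler | hdup⟩ :=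
    hstrat sp (response strat sp) (response_eq strat sp) fun _ _ _ => trivial
  · obtain ⟨N, hN⟩ := hspoiler
    exact absurd trivial (hN N le_rfl)
  · exact ⟨hsome, hdup⟩

inductive GuessQ
  | last (b : Bool)
  | committed

def guessBA : BA Bool where
  Q := GuessQ
  init := .last false
  trans q b p := (q ≠ .committed ∧ p = .last b) ∨ (b = false ∧ p = .committed)
  acc q := q ≠ .last false

def lastLetterRun (w : ℕ → Bool) : ℕ → GuessQ
  | 0 => .last false
  | n + 1 => .last (w n)

lemma mem_lang_guessBA (w : ℕ → Bool) : w ∈ guessBA.Lang := by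
  by_cases hw : ∃ N, ∀ n, N ≤ n → w n = false
  · obtain ⟨N, hN⟩ := hw
    refine ⟨fun n => if N < n then .committed else lastLetterRun w n,
      by simp [guessBA, lastLetterRun], fun n => ?_,
      fun n => ⟨n + N + 1, by omega, by simp [guessBA, show N < n + N + 1 by omega]⟩⟩
    rcases lt_trichotomy N n with h | rfl | h
    · simp [guessBA, h, h.trans (Nat.lt_succ_self n), hN n h.le]
    · cases N <;> simp [guessBA, lastLetterRun, hN]
    · cases n <;> simp [guessBA, lastLetterRun, h] <;> omega
  · push Not at hw
    refine ⟨lastLetterRun w, rfl, fun n => ?_, fun n => ?_⟩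
    · cases n <;> simp [guessBA, lastLetterRun]
    · obtain ⟨m, hm, hwm⟩ := hw n
      exact ⟨m + 1, by omega, by simp [guessBA, lastLetterRun, hwm]⟩

section GuessGame

variable {A : BA Bool} {sp : ℕ → Bool × A.Q} {dm : ℕ → Option GuessQ}

lemma committed_of_accepting_move (hsp : ∀ n, (sp n).1 = false) {m : ℕ}
    {c : A.Q × List Bool × GuessQ} (h : playCfg1 A guessBA sp dm (m + 1) = some c) {p : GuessQ}
    (hm : dm m = some p) (hp : guessBA.acc p) : c.2.2 = .committed := by
  obtain ⟨c₀, h₀, ⟨hnone, -⟩ | ⟨b, hbuf, hmove, htrans⟩⟩ := playCfg1_succ_cases h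
  · simp [hm] at hnone
  have hb : b = false := by
    have hb : b ∈ c₀.2.1 ++ [(sp m).1] := hbuf ▸ List.mem_cons_self
    rcases List.mem_append.mp hb with hb | hb
    · obtain ⟨i, -, rfl⟩ := mem_buffer_of_playCfg1_eq_some h₀ hb
      exact hsp i
    · simpa [hsp m] using hb
  obtain rfl : p = c.2.2 := Option.some_injective _ (hm.symm.trans hmove)
  simp only [guessBA, hb] at htrans hp
  tauto

lemma committed_step {n : ℕ} {c c' : A.Q × List Bool × GuessQ}
    (h : playCfg1 A guessBA sp dm n = some c) (h' : playCfg1 A guessBA sp dm (n + 1) = some c')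
    (hc : c.2.2 = .committed) (hsp : (sp n).1 = true) :
    c'.2.2 = .committed ∧ c'.2.1.count false ≤ c.2.1.count false ∧
      (dm n ≠ none → c'.2.1.count false < c.2.1.count false) := by
  obtain ⟨c₀, h₀, ⟨hnone, hc'⟩ | ⟨b, hbuf, hmove, htrans⟩⟩ := playCfg1_succ_cases h'
  all_goals obtain rfl : c = c₀ := Option.some_injective _ (h.symm.trans h₀)
  · exact ⟨by simp [hc', hc], by simp [hc', hsp], fun hmove => absurd hnone hmove⟩
  · simp only [guessBA, hc, ne_eq, not_true_eq_false, false_and, false_or] at htrans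
    obtain ⟨rfl, hp⟩ := htrans
    have hcount : (false :: c'.2.1).count false = c.2.1.count false := by
      rw [← hbuf, List.count_append, hsp]
      simp
    rw [List.count_cons_self] at hcount
    simp only [hp, ne_eq, true_and]
    omega

lemma eventually_no_move_of_committed {t : ℕ} (hsp : ∀ n, t ≤ n → (sp n).1 = true)
    {cfg : ℕ → A.Q × List Bool × GuessQ}
    (hcfg : ∀ n, playCfg1 A guessBA sp dm n = some (cfg n))
    (ht : (cfg t).2.2 = .committed) : ∃ N, ∀ n, N ≤ n → dm n = none := by
  have hcommitted : ∀ n, t ≤ n → (cfg n).2.2 = .committed := by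
    intro n hn
    induction n, hn using Nat.le_induction with
    | base => exact ht
    | succ n hn ih => exact (committed_step (hcfg n) (hcfg (n + 1)) ih (hsp n hn)).1
  have hstep n (hn : t ≤ n) := committed_step (hcfg n) (hcfg (n + 1)) (hcommitted n hn) (hsp n hn)
  let falses : ℕ →o ℕᵒᵈ := ⟨fun k => OrderDual.toDual ((cfg (t + k)).2.1.count false),
    monotone_nat_of_le_succ fun k => (hstep (t + k) (by omega)).2.1⟩
  obtain ⟨N, hN⟩ := WellFoundedGT.monotone_chain_condition falses
  refine ⟨t + N, fun n hn => ?_⟩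
  by_contra hmove
  have hlt := (hstep n (by omega)).2.2 hmove
  have h₁ := hN (n - t) (by omega)
  have h₂ := hN (n + 1 - t) (by omega)
  simp only [falses, OrderHom.coe_mk, OrderDual.toDual_inj, show t + (n - t) = n by omega,
    show t + (n + 1 - t) = n + 1 by omega] at h₁ h₂
  omega

end GuessGame

/-- The converse of "unbounded single-buffer simulation implies
language inclusion" fails: there are Büchi automata with `L(A) ⊆ L(B)` but
`A ⋢ω B`. -/
theorem lang_incl_not_implies_sim1_unbounded :
    ∃ (S : Type) (A B : BA S), BA.Lang A ⊆ BA.Lang B ∧ ¬ Sim1 A B ⊤ := by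
  refine ⟨Bool, BA.univ Bool, guessBA, fun w _ => mem_lang_guessBA w, fun hsim => ?_⟩
  obtain ⟨strat, hwin⟩ := hsim.univ_left
  set allFalse : ℕ → Bool × Unit := fun _ => (false, ())
  obtain ⟨hsome, -, hacc⟩ := hwin allFalse
  obtain ⟨t, -, p, hp, hpacc⟩ := hacc 0
  obtain ⟨c, hc⟩ := Option.isSome_iff_exists.mp (hsome (t + 1))
  have hcommitted := committed_of_accepting_move (fun _ => rfl) hc hp hpacc
  set switched : ℕ → Bool × Unit := fun n => (decide (t + 1 ≤ n), ())
  obtain ⟨hsome', hmoves, -⟩ := hwin switched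
  choose cfg hcfg using fun n => Option.isSome_iff_exists.mp (hsome' n)
  have hagree : cfg (t + 1) = c := by
    rw [← Option.some_inj, ← hcfg, ← hc]
    exact playCfg1_response_congr fun i hi => by simp [switched, allFalse, show ¬t < i by omega]
  obtain ⟨N, hN⟩ := eventually_no_move_of_committed (t := t + 1) (by simp [switched]) hcfg
    (hagree ▸ hcommitted)
  obtain ⟨m, hm, hmove⟩ := hmoves N
  exact hmove (hN m hm)
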